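/- Σ_{k=0}^{∞} h_k / k! = e · Ein(1), where h_k is the k-th harmonic number (with h₀ = 0) and Ein(1) = Σ_{n=1}^{∞} (−1)^{n−1}/(n · n!). -/

import Mathlib

/-- The `k`-th harmonic number as a real number (`h 0 = 0`). -/
noncomputable def h (k : ℕ) : ℝ := ∑ j ∈ Finset.range k, (1 : ℝ) / (j + 1)

/-- The entire exponential integral `Ein(z) = ∑_{n≥1} (-1)^{n-1} zⁿ/(n·n!)`. -/
noncomputable def Ein (z : ℝ) : ℝ :=
  ∑' n : ℕ, (-1) ^ n * z ^ (n + 1) / ((n + 1) * (n + 1).factorial)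

/-!
Multiplying the series `Ein x = ∑ (-1)ʲ xʲ⁺¹/((j+1)(j+1)!)` by `exp x = ∑ xᵐ/m!` (Cauchy product),
the coefficient of `xⁿ⁺¹/(n+1)!` is `∑_{j<n+1} (-1)ʲ C(n+1, j+1)/(j+1)`, which is the harmonic
number `hₙ₊₁`, as follows from Pascal's rule by induction on `n`. Hence
`exp x · Ein x = ∑ hₖ xᵏ/k!`, and `x = 1` gives the theorem.
-/

open Finset Nat

theorem sum_range_neg_one_pow_mul_choose_succ (n : ℕ) :
    ∑ j ∈ range (n + 1), (-1 : ℚ) ^ j * (n + 1).choose (j + 1) = 1 := by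
  have := Int.alternating_sum_range_choose_of_ne n.succ_ne_zero
  rw [sum_range_succ'] at this
  simp only [pow_succ, mul_neg_one, neg_mul, sum_neg_distrib, pow_zero,
    choose_zero_right, cast_one, mul_one] at this
  exact_mod_cast neg_add_eq_zero.mp this

theorem sum_range_neg_one_pow_mul_choose_div_succ (n : ℕ) :
    ∑ j ∈ range (n + 1), (-1 : ℚ) ^ j * n.choose j / (j + 1) = 1 / (n + 1) := by
  have hchoose (j : ℕ) : (n.choose j : ℚ) / (j + 1) = (n + 1).choose (j + 1) / (n + 1) := by
    rw [div_eq_div_iff (by positivity) (by positivity), mul_comm]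
    exact_mod_cast add_one_mul_choose_eq n j
  simp_rw [mul_div_assoc, hchoose, ← mul_div_assoc, ← sum_div,
    sum_range_neg_one_pow_mul_choose_succ]

theorem harmonic_eq_sum_neg_one_pow_mul_choose_succ_div_succ (n : ℕ) :
    harmonic n = ∑ j ∈ range n, (-1 : ℚ) ^ j * n.choose (j + 1) / (j + 1) := by
  induction n with
  | zero => simp
  | succ n ih =>
    have hlast : ∑ j ∈ range (n + 1), (-1 : ℚ) ^ j * n.choose (j + 1) / (j + 1) = harmonic n := by
      rw [sum_range_succ, choose_succ_self, cast_zero, mul_zero, zero_div, add_zero, ih]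
    simp_rw [choose_succ_succ', cast_add, mul_add, add_div, sum_add_distrib,
      sum_range_neg_one_pow_mul_choose_div_succ, hlast, harmonic_succ]
    push_cast
    ring

theorem h_eq_harmonic (k : ℕ) : h k = harmonic k := by
  simp [h, harmonic]

theorem ein_term_mul_exp_term (x : ℝ) {n j : ℕ} (hj : j ≤ n) :
    (-1) ^ j * x ^ (j + 1) / ((j + 1) * (j + 1)!) * (x ^ (n - j) / (n - j)!) =
      x ^ (n + 1) / (n + 1)! * ((-1) ^ j * (n + 1).choose (j + 1) / (j + 1)) := by
  have hpow : x ^ (n + 1) = x ^ (j + 1) * x ^ (n - j) := by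
    rw [← pow_add]; congr 1; omega
  rw [cast_choose ℝ (succ_le_succ hj), succ_sub_succ, hpow]
  field_simp

theorem summable_norm_ein_term (x : ℝ) :
    Summable fun n : ℕ => ‖(-1) ^ n * x ^ (n + 1) / ((n + 1) * (n + 1)!)‖ := by
  refine .of_nonneg_of_le (fun _ => norm_nonneg _) (fun n => ?_)
    ((summable_nat_add_iff 1).2 (Real.summable_pow_div_factorial |x|))
  rw [norm_div, norm_mul, norm_pow, norm_neg, norm_one, one_pow, one_mul, norm_pow,
    Real.norm_eq_abs, Real.norm_of_nonneg (by positivity)]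
  gcongr
  nlinarith [(n + 1)!.cast_nonneg (α := ℝ)]

theorem hasSum_h_mul_pow_div_factorial (x : ℝ) :
    HasSum (fun k => h k * x ^ k / k !) (Real.exp x * Ein x) := by
  have hexp : HasSum (fun n => x ^ n / n !) (Real.exp x) := by
    rw [Real.exp_eq_exp_ℝ]; exact NormedSpace.expSeries_div_hasSum_exp x
  have hcauchy := hasSum_sum_range_mul_of_summable_norm (summable_norm_ein_term x)
    (Real.summable_pow_div_factorial x).norm
  rw [← Ein, hexp.tsum_eq, mul_comm] at hcauchy
  have hcoeff (n : ℕ) : ∑ j ∈ range (n + 1),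
      (-1) ^ j * x ^ (j + 1) / ((j + 1) * (j + 1)!) * (x ^ (n - j) / (n - j)!) =
        h (n + 1) * x ^ (n + 1) / (n + 1)! := by
    rw [sum_congr rfl fun j hj => ein_term_mul_exp_term x (mem_range_succ_iff.1 hj), ← mul_sum,
      h_eq_harmonic, harmonic_eq_sum_neg_one_pow_mul_choose_succ_div_succ]
    push_cast
    ring
  rw [← hasSum_nat_add_iff' 1]
  simpa [hcoeff, h] using hcauchy

theorem stmt12 :
    ∑' k : ℕ, h k / k.factorial = Real.exp 1 * Ein 1 := by
  simpa using (hasSum_h_mul_pow_div_factorial 1).tsum_eq
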